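/- Let A ∈ ℂ^{n×n} be a Hermitian matrix with eigenvalues (counted with multiplicities) λ_1 ≥ … ≥ λ_k > 0 ≥ λ_{k+1} ≥ … ≥ λ_n, let D ∈ ℂ^{m×m} be a Hermitian matrix with eigenvalues (counted with multiplicities) μ_1 ≤ … ≤ μ_r ≤ 0 < μ_{r+1} ≤ … ≤ μ_m, let p = dim ker D, and let κ > 0. Then there exists a matrix K ∈ ℂ^{n×m} with ‖K‖ ≤ κ such that D + K*AK is positive semidefinite if and only if r − p ≤ k and κ²λ_i + μ_i ≥ 0 for all i = 1,…,r−p. -/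

import Mathlib

/-!
Conjugating by the diagonalising unitaries, which preserve the spectral norm and positive
semidefiniteness, reduces everything to `A = diag λ` and `D = diag μ`; the form of `D + KᴴAK` at
`x` is then `∑ μⱼ|xⱼ|² + ∑ λₛ|(Kx)ₛ|²`. A dimension count gives `x ≠ 0` supported on the first
`i + 1` coordinates with `(Kx)ₛ = 0` for `s < i`; there the form is at most `(μᵢ + κ²λᵢ)‖x‖²`,
which forces `κ²λᵢ + μᵢ ≥ 0`. Since `p` counts the zero `μⱼ`, the negative ones are exactly
`μ₀, …, μ_{r-p-1}`, and the same count with `r - p` and `k` (where `λₛ ≤ 0` for `s ≥ k`) shows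
`r - p ≤ k`. Conversely, `κ` times the partial identity on the first `r - p` coordinates makes
`D + KᴴAK` diagonal with entries `μⱼ + κ²λⱼ` for `j < r - p` and `μⱼ ≥ 0` otherwise.
-/

open scoped Matrix ComplexOrder

/-- The spectral (operator) norm of a complex rectangular matrix. -/
noncomputable def specNorm {n m : ℕ} (K : Matrix (Fin n) (Fin m) ℂ) : ℝ :=
  ‖LinearMap.toContinuousLinearMap (Matrix.toEuclideanLin K)‖

open Matrix Finset
open scoped Matrix.Norms.L2Operator

lemma specNorm_eq_l2_opNorm {n m : ℕ} (K : Matrix (Fin n) (Fin m) ℂ) : specNorm K = ‖K‖ := rfl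

section UnitaryInvariance

variable {ι ι' : Type*} [Fintype ι] [DecidableEq ι] [Fintype ι'] [DecidableEq ι']

lemma l2_opNorm_unitary_mul {U : Matrix ι ι ℂ} (hU : U ∈ unitaryGroup ι ℂ) (K : Matrix ι ι' ℂ) :
    ‖U * K‖ = ‖K‖ := by
  have hUU : Uᴴ * U = 1 := mem_unitaryGroup_iff'.mp hU
  have h : (U * K)ᴴ * (U * K) = Kᴴ * K := by
    rw [conjTranspose_mul, Matrix.mul_assoc, ← Matrix.mul_assoc Uᴴ, hUU, Matrix.one_mul]
  have := congrArg norm h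
  rw [l2_opNorm_conjTranspose_mul_self, l2_opNorm_conjTranspose_mul_self] at this
  exact mul_self_inj (norm_nonneg _) (norm_nonneg _) |>.mp this

lemma l2_opNorm_mul_unitary {V : Matrix ι' ι' ℂ} (hV : V ∈ unitaryGroup ι' ℂ) (K : Matrix ι ι' ℂ) :
    ‖K * V‖ = ‖K‖ := by
  rw [← l2_opNorm_conjTranspose, conjTranspose_mul, ← star_eq_conjTranspose V,
    l2_opNorm_unitary_mul (Unitary.star_mem hV), l2_opNorm_conjTranspose]

lemma exists_posSemidef_unitary_conj_iff {U : Matrix ι ι ℂ} {V : Matrix ι' ι' ℂ}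
    (hU : U ∈ unitaryGroup ι ℂ) (hV : V ∈ unitaryGroup ι' ℂ) (Λ : Matrix ι ι ℂ) (M : Matrix ι' ι' ℂ)
    (c : ℝ) :
    (∃ K : Matrix ι ι' ℂ, ‖K‖ ≤ c ∧ (V * M * Vᴴ + Kᴴ * (U * Λ * Uᴴ) * K).PosSemidef) ↔
      ∃ L : Matrix ι ι' ℂ, ‖L‖ ≤ c ∧ (M + Lᴴ * Λ * L).PosSemidef := by
  have hUU : Uᴴ * U = 1 := mem_unitaryGroup_iff'.mp hU
  have hVV : Vᴴ * V = 1 := mem_unitaryGroup_iff'.mp hV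
  have hsurj : ∀ K : Matrix ι ι' ℂ, U * (Uᴴ * K * V) * Vᴴ = K := fun K => by
    rw [← Matrix.mul_assoc, ← Matrix.mul_assoc, ← star_eq_conjTranspose U,
      mem_unitaryGroup_iff.mp hU, Matrix.one_mul, Matrix.mul_assoc, ← star_eq_conjTranspose V,
      mem_unitaryGroup_iff.mp hV, Matrix.mul_one]
  have hconj : ∀ L : Matrix ι ι' ℂ,
      V * M * Vᴴ + (U * L * Vᴴ)ᴴ * (U * Λ * Uᴴ) * (U * L * Vᴴ) = V * (M + Lᴴ * Λ * L) * star V := by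
    intro L
    simp only [conjTranspose_mul, conjTranspose_conjTranspose, star_eq_conjTranspose,
      Matrix.mul_add, Matrix.add_mul, Matrix.mul_assoc]
    simp only [← Matrix.mul_assoc Uᴴ U, hUU, Matrix.one_mul]
  have hVunit : IsUnit V := (Unitary.toUnits ⟨V, hV⟩).isUnit
  constructor
  · rintro ⟨K, hKc, hK⟩
    refine ⟨Uᴴ * K * V, ?_, ?_⟩
    · rwa [l2_opNorm_mul_unitary hV, ← star_eq_conjTranspose,
        l2_opNorm_unitary_mul (Unitary.star_mem hU)]
    · rwa [← hVunit.posSemidef_star_right_conjugate_iff, ← hconj, hsurj]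
  · rintro ⟨L, hLc, hL⟩
    refine ⟨U * L * Vᴴ, ?_, ?_⟩
    · rwa [← star_eq_conjTranspose, l2_opNorm_mul_unitary (Unitary.star_mem hV),
        l2_opNorm_unitary_mul hU]
    · rwa [hconj, hVunit.posSemidef_star_right_conjugate_iff]

end UnitaryInvariance

lemma re_star_dotProduct_diagonal_mulVec {ι : Type*} [Fintype ι] [DecidableEq ι] (d : ι → ℝ)
    (x : ι → ℂ) : (star x ⬝ᵥ (diagonal (fun i => (d i : ℂ)) *ᵥ x)).re = ∑ i, d i * ‖x i‖ ^ 2 := by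
  simp only [dotProduct, mulVec_diagonal, Pi.star_apply, Complex.re_sum]
  refine Finset.sum_congr rfl fun i _ => ?_
  rw [mul_left_comm, Complex.star_def, Complex.conj_mul', ← Complex.ofReal_pow,
    Complex.re_ofReal_mul, Complex.ofReal_re]

lemma sum_mul_norm_sq_le {ι : Type*} [Fintype ι] {c : ι → ℝ} {C : ℝ} {x : ι → ℂ}
    (h : ∀ i, x i ≠ 0 → c i ≤ C) : ∑ i, c i * ‖x i‖ ^ 2 ≤ C * ∑ i, ‖x i‖ ^ 2 := by
  rw [Finset.mul_sum]
  refine Finset.sum_le_sum fun i _ => ?_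
  by_cases hx : x i = 0
  · simp [hx]
  · exact mul_le_mul_of_nonneg_right (h i hx) (sq_nonneg _)

lemma sum_norm_sq_pos {ι : Type*} [Fintype ι] {x : ι → ℂ} (hx : x ≠ 0) : 0 < ∑ i, ‖x i‖ ^ 2 := by
  obtain ⟨i, hi⟩ := Function.ne_iff.mp hx
  exact Finset.sum_pos' (fun j _ => sq_nonneg _) ⟨i, mem_univ i, by positivity⟩

lemma sum_norm_sq_mulVec_le {ι ι' : Type*} [Fintype ι] [Fintype ι'] [DecidableEq ι']
    (L : Matrix ι ι' ℂ) (x : ι' → ℂ) :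
    ∑ i, ‖(L *ᵥ x) i‖ ^ 2 ≤ ‖L‖ ^ 2 * ∑ j, ‖x j‖ ^ 2 := by
  have h := L.l2_opNorm_mulVec (WithLp.toLp 2 x)
  rw [← sq_le_sq₀ (norm_nonneg _) (by positivity), mul_pow, EuclideanSpace.norm_sq_eq,
    EuclideanSpace.norm_sq_eq] at h
  simpa using h

lemma finrank_ker_mulVecLin_unitary_conj_diagonal {ι : Type*} [Fintype ι] [DecidableEq ι]
    {V : Matrix ι ι ℂ} (hV : V ∈ unitaryGroup ι ℂ) (w : ι → ℂ) :
    Module.finrank ℂ (LinearMap.ker (V * diagonal w * Vᴴ).mulVecLin) =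
      Fintype.card {i // w i = 0} := by
  have hVdet : IsUnit V.det := (isUnit_iff_isUnit_det V).mp (Unitary.toUnits ⟨V, hV⟩).isUnit
  have hVHdet : IsUnit Vᴴ.det := by rw [det_conjTranspose]; exact hVdet.star
  have hrank : (V * diagonal w * Vᴴ).rank = Fintype.card {i // w i ≠ 0} := by
    rw [Matrix.mul_assoc, rank_mul_eq_right_of_isUnit_det _ _ hVdet,
      rank_mul_eq_left_of_isUnit_det _ _ hVHdet, rank_diagonal]
  have hsum := LinearMap.finrank_range_add_finrank_ker (V * diagonal w * Vᴴ).mulVecLin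
  rw [← Matrix.rank, hrank, Module.finrank_fintype_fun_eq_card] at hsum
  have hcompl := Fintype.card_subtype_compl (fun i => w i = 0)
  have hle := Fintype.card_subtype_le (fun i => w i = 0)
  simp only [ne_eq] at hsum
  rw [hcompl] at hsum
  omega

lemma card_subtype_ofReal_eq_zero (mu : ℕ → ℝ) (m : ℕ) :
    Fintype.card {i : Fin m // (mu i : ℂ) = 0} = #{i ∈ range m | mu i = 0} := by
  simp only [Complex.ofReal_eq_zero, Fintype.card_subtype]
  rw [← card_map Fin.valEmbedding]
  congr 1
  ext i
  simp only [mem_map, mem_filter, mem_univ, true_and, Fin.valEmbedding_apply, mem_range]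
  exact ⟨fun ⟨j, hj, hji⟩ => hji ▸ ⟨j.2, hj⟩, fun ⟨hi, h0⟩ => ⟨⟨i, hi⟩, h0, rfl⟩⟩

lemma eq_zero_iff_sub_card_le {m r : ℕ} {mu : ℕ → ℝ} (hrm : r ≤ m)
    (hmu : ∀ i j : ℕ, i ≤ j → j < m → mu i ≤ mu j) (hnonpos : ∀ i < r, mu i ≤ 0)
    (hpos : ∀ i, r ≤ i → i < m → 0 < mu i) {j : ℕ} (hj : j < r) :
    mu j = 0 ↔ r - #{i ∈ range m | mu i = 0} ≤ j := by
  constructor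
  · intro h0
    have hsub : Ico j r ⊆ {i ∈ range m | mu i = 0} := fun i hi => by
      rw [mem_Ico] at hi
      rw [mem_filter, mem_range]
      exact ⟨by omega, le_antisymm (hnonpos i hi.2) (h0 ▸ hmu j i hi.1 (by omega))⟩
    have := card_le_card hsub
    rw [Nat.card_Ico] at this
    omega
  · intro hle
    by_contra h0
    have hneg : mu j < 0 := lt_of_le_of_ne (hnonpos j hj) h0
    have hsub : {i ∈ range m | mu i = 0} ⊆ Ioo j r := fun i hi => by
      rw [mem_filter, mem_range] at hi
      rw [mem_Ioo]
      constructor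
      · by_contra! hij
        linarith [hmu i j hij (by omega)]
      · by_contra! hri
        linarith [hpos i hri hi.1]
    have := card_le_card hsub
    rw [Nat.card_Ioo] at this
    omega

def scaledPartialId (n m q : ℕ) (κ : ℝ) : Matrix (Fin n) (Fin m) ℂ :=
  of fun i j => if (i : ℕ) = j ∧ (j : ℕ) < q then (κ : ℂ) else 0

section Diagonal

variable {n m : ℕ} {lam mu : ℕ → ℝ}

lemma sum_mul_norm_sq_add_nonneg {L : Matrix (Fin n) (Fin m) ℂ}
    (hL : (diagonal (fun j : Fin m => (mu j : ℂ)) +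
      Lᴴ * diagonal (fun i : Fin n => (lam i : ℂ)) * L).PosSemidef) (x : Fin m → ℂ) :
    0 ≤ ∑ j : Fin m, mu j * ‖x j‖ ^ 2 + ∑ i : Fin n, lam i * ‖(L *ᵥ x) i‖ ^ 2 := by
  have h := (Complex.nonneg_iff.mp (hL.dotProduct_mulVec_nonneg x)).1
  have hquad : star x ⬝ᵥ ((Lᴴ * diagonal (fun i : Fin n => (lam i : ℂ)) * L) *ᵥ x) =
      star (L *ᵥ x) ⬝ᵥ (diagonal (fun i : Fin n => (lam i : ℂ)) *ᵥ (L *ᵥ x)) := by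
    rw [star_mulVec, ← dotProduct_mulVec, ← mulVec_mulVec, ← mulVec_mulVec]
  rwa [add_mulVec, dotProduct_add, hquad, Complex.add_re, re_star_dotProduct_diagonal_mulVec,
    re_star_dotProduct_diagonal_mulVec] at h

lemma exists_ne_zero_support_lt (L : Matrix (Fin n) (Fin m) ℂ) {a b : ℕ} (hba : b < a)
    (ham : a ≤ m) :
    ∃ x ≠ 0, (∀ j : Fin m, x j ≠ 0 → (j : ℕ) < a) ∧ ∀ i : Fin n, (L *ᵥ x) i ≠ 0 → b ≤ i := by
  let Φ := (LinearMap.funLeft ℂ ℂ (Subtype.val : {j : Fin m // a ≤ j} → Fin m)).prod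
    (LinearMap.funLeft ℂ ℂ (Subtype.val : {i : Fin n // i < b} → Fin n) ∘ₗ L.mulVecLin)
  have hdim : Module.finrank ℂ ({j : Fin m // a ≤ j} → ℂ) +
      Module.finrank ℂ ({i : Fin n // i < b} → ℂ) < Module.finrank ℂ (Fin m → ℂ) := by
    simp only [Module.finrank_fintype_fun_eq_card, Fintype.card_subtype, Fintype.card_fin]
    have h1 := Fin.card_filter_val_lt (n := m) (m := a)
    have h2 := Fin.card_filter_val_lt (n := n) (m := b)
    have h3 := Finset.card_filter_add_card_filter_not (s := (univ : Finset (Fin m)))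
      (fun j => (j : ℕ) < a)
    simp only [not_lt, card_univ, Fintype.card_fin] at h3
    omega
  obtain ⟨x, hx, hx0⟩ := Submodule.exists_mem_ne_zero_of_ne_bot
    (LinearMap.ker_ne_bot_of_finrank_lt (f := Φ) (by rwa [Module.finrank_prod]))
  refine ⟨x, hx0, fun j hj => ?_, fun i hi => ?_⟩
  · by_contra! h
    exact hj (congrFun (congrArg Prod.fst hx) ⟨j, h⟩)
  · by_contra! h
    exact hi (congrFun (congrArg Prod.snd hx) ⟨i, h⟩)

lemma le_of_posSemidef_diagonal_add {k q : ℕ} {L : Matrix (Fin n) (Fin m) ℂ} (hqm : q ≤ m)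
    (hmu : ∀ i j : ℕ, i ≤ j → j < m → mu i ≤ mu j) (hneg : ∀ j < q, mu j < 0)
    (hlamnonpos : ∀ i : ℕ, k ≤ i → i < n → lam i ≤ 0)
    (hL : (diagonal (fun j : Fin m => (mu j : ℂ)) +
      Lᴴ * diagonal (fun i : Fin n => (lam i : ℂ)) * L).PosSemidef) :
    q ≤ k := by
  by_contra! hkq
  obtain ⟨x, hx0, hxa, hxb⟩ := exists_ne_zero_support_lt L hkq hqm
  have hmu_le : ∑ j : Fin m, mu j * ‖x j‖ ^ 2 ≤ mu (q - 1) * ∑ j, ‖x j‖ ^ 2 :=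
    sum_mul_norm_sq_le fun j hj => hmu j (q - 1) (by have := hxa j hj; omega) (by omega)
  have hlam_le : ∑ i : Fin n, lam i * ‖(L *ᵥ x) i‖ ^ 2 ≤ 0 * ∑ i, ‖(L *ᵥ x) i‖ ^ 2 :=
    sum_mul_norm_sq_le fun i hi => hlamnonpos i (hxb i hi) i.2
  have hneg_mul := mul_neg_of_neg_of_pos (hneg (q - 1) (by omega)) (sum_norm_sq_pos hx0)
  linarith [sum_mul_norm_sq_add_nonneg hL x]

lemma nonneg_of_posSemidef_diagonal_add {i : ℕ} {κ : ℝ} {L : Matrix (Fin n) (Fin m) ℂ}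
    (him : i < m) (hLκ : ‖L‖ ≤ κ)
    (hlam : ∀ s t : ℕ, s ≤ t → t < n → lam t ≤ lam s) (hlampos : 0 < lam i)
    (hmu : ∀ s t : ℕ, s ≤ t → t < m → mu s ≤ mu t)
    (hL : (diagonal (fun j : Fin m => (mu j : ℂ)) +
      Lᴴ * diagonal (fun i : Fin n => (lam i : ℂ)) * L).PosSemidef) :
    0 ≤ κ ^ 2 * lam i + mu i := by
  obtain ⟨x, hx0, hxa, hxb⟩ := exists_ne_zero_support_lt L (Nat.lt_succ_self i) him
  have hmu_le : ∑ j : Fin m, mu j * ‖x j‖ ^ 2 ≤ mu i * ∑ j, ‖x j‖ ^ 2 :=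
    sum_mul_norm_sq_le fun j hj => hmu j i (Nat.lt_succ_iff.mp (hxa j hj)) him
  have hlam_le : ∑ s : Fin n, lam s * ‖(L *ᵥ x) s‖ ^ 2 ≤ lam i * ∑ s, ‖(L *ᵥ x) s‖ ^ 2 :=
    sum_mul_norm_sq_le fun s hs => hlam i s (hxb s hs) s.2
  have hLx : ∑ s, ‖(L *ᵥ x) s‖ ^ 2 ≤ κ ^ 2 * ∑ j, ‖x j‖ ^ 2 :=
    (sum_norm_sq_mulVec_le L x).trans <| by gcongr
  have hx := sum_norm_sq_pos hx0
  have : 0 ≤ (κ ^ 2 * lam i + mu i) * ∑ j, ‖x j‖ ^ 2 := by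
    nlinarith [sum_mul_norm_sq_add_nonneg hL x, mul_le_mul_of_nonneg_left hLx hlampos.le]
  exact nonneg_of_mul_nonneg_left this hx

lemma conjTranspose_scaledPartialId_mul_diagonal_mul {q : ℕ} (hqn : q ≤ n) (κ : ℝ) (d : ℕ → ℝ) :
    (scaledPartialId n m q κ)ᴴ * diagonal (fun i : Fin n => (d i : ℂ)) * scaledPartialId n m q κ =
      diagonal (fun j : Fin m => ((if (j : ℕ) < q then κ ^ 2 * d j else 0 : ℝ) : ℂ)) := by
  ext j j'
  rw [mul_apply]
  simp only [mul_diagonal, conjTranspose_apply, scaledPartialId, of_apply, diagonal_apply]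
  by_cases hj : (j : ℕ) < q
  · have hjn : (j : ℕ) < n := by omega
    rw [Finset.sum_eq_single ⟨j, hjn⟩
      (fun i _ hij => by simp [show (i : ℕ) ≠ j from fun h => hij (Fin.ext h)]) (by simp)]
    by_cases hjj : j = j'
    · subst hjj
      simp only [hj, and_self, if_true, RCLike.star_def, Complex.conj_ofReal, Complex.ofReal_mul,
        Complex.ofReal_pow]
      ring
    · simp [hjj, Fin.val_ne_of_ne hjj]
  · simp [hj]

lemma l2_opNorm_scaledPartialId_le {q : ℕ} (hqn : q ≤ n) {κ : ℝ} (hκ : 0 ≤ κ) :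
    ‖scaledPartialId n m q κ‖ ≤ κ := by
  have hK := conjTranspose_scaledPartialId_mul_diagonal_mul (m := m) hqn κ 1
  simp only [Pi.one_apply, Complex.ofReal_one, diagonal_one, Matrix.mul_one] at hK
  have hnorm := congrArg norm hK
  rw [l2_opNorm_conjTranspose_mul_self, l2_opNorm_diagonal] at hnorm
  refine (mul_self_le_mul_self_iff (norm_nonneg _) hκ).mpr (hnorm ▸ ?_)
  refine (pi_norm_le_iff_of_nonneg (by positivity)).mpr fun j => ?_
  split_ifs
  · simp [abs_of_nonneg hκ, sq]
  · simpa using mul_self_nonneg κ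

lemma exists_posSemidef_diagonal_add_of_le {q : ℕ} {κ : ℝ} (hqn : q ≤ n) (hκ : 0 ≤ κ)
    (hmu : ∀ j : ℕ, q ≤ j → j < m → 0 ≤ mu j) (hineq : ∀ j < q, 0 ≤ κ ^ 2 * lam j + mu j) :
    ∃ L : Matrix (Fin n) (Fin m) ℂ, ‖L‖ ≤ κ ∧ (diagonal (fun j : Fin m => (mu j : ℂ)) +
      Lᴴ * diagonal (fun i : Fin n => (lam i : ℂ)) * L).PosSemidef := by
  refine ⟨scaledPartialId n m q κ, l2_opNorm_scaledPartialId_le hqn hκ, ?_⟩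
  rw [conjTranspose_scaledPartialId_mul_diagonal_mul hqn, diagonal_add, posSemidef_diagonal_iff]
  intro j
  rw [← Complex.ofReal_add, Complex.zero_le_real]
  split_ifs with hj
  · linarith [hineq j hj]
  · simpa using hmu j (not_lt.mp hj) j.2

end Diagonal

theorem exists_possemidef_completion_iff_general
    (n m k r p : ℕ) (hkn : k ≤ n) (hrm : r ≤ m)
    (κ : ℝ) (hκ : 0 < κ)
    (A : Matrix (Fin n) (Fin n) ℂ) (D : Matrix (Fin m) (Fin m) ℂ)
    (lam mu : ℕ → ℝ)
    (hlam : ∀ i j : ℕ, i ≤ j → j < n → lam j ≤ lam i)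
    (hlampos : ∀ i : ℕ, i < k → 0 < lam i)
    (hlamnonpos : ∀ i : ℕ, k ≤ i → i < n → lam i ≤ 0)
    (hmu : ∀ i j : ℕ, i ≤ j → j < m → mu i ≤ mu j)
    (hmunonpos : ∀ i : ℕ, i < r → mu i ≤ 0)
    (hmupos : ∀ i : ℕ, r ≤ i → i < m → 0 < mu i)
    (hAdiag : ∃ U ∈ Matrix.unitaryGroup (Fin n) ℂ,
      A = U * Matrix.diagonal (fun i : Fin n => (lam i : ℂ)) * Uᴴ)
    (hDdiag : ∃ V ∈ Matrix.unitaryGroup (Fin m) ℂ,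
      D = V * Matrix.diagonal (fun j : Fin m => (mu j : ℂ)) * Vᴴ)
    (hp : p = Module.finrank ℂ (LinearMap.ker D.mulVecLin)) :
    (∃ K : Matrix (Fin n) (Fin m) ℂ, specNorm K ≤ κ ∧ (D + Kᴴ * A * K).PosSemidef) ↔
      (r - p ≤ k ∧ ∀ i : ℕ, i < r - p → 0 ≤ κ ^ 2 * lam i + mu i) := by
  obtain ⟨U, hU, rfl⟩ := hAdiag
  obtain ⟨V, hV, rfl⟩ := hDdiag
  rw [finrank_ker_mulVecLin_unitary_conj_diagonal hV, card_subtype_ofReal_eq_zero] at hp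
  have hzero : ∀ j < r, mu j = 0 ↔ r - p ≤ j := fun j hj => by
    rw [hp]
    exact eq_zero_iff_sub_card_le hrm hmu hmunonpos hmupos hj
  simp only [specNorm_eq_l2_opNorm]
  rw [exists_posSemidef_unitary_conj_iff hU hV]
  constructor
  · rintro ⟨L, hLκ, hL⟩
    have hneg : ∀ j < r - p, mu j < 0 := fun j hj =>
      (hmunonpos j (by omega)).lt_of_ne fun h0 => by
        have := (hzero j (by omega)).mp h0
        omega
    have hqk := le_of_posSemidef_diagonal_add (by omega) hmu hneg hlamnonpos hL
    exact ⟨hqk, fun i hi =>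
      nonneg_of_posSemidef_diagonal_add (by omega) hLκ hlam (hlampos i (by omega)) hmu hL⟩
  · rintro ⟨hqk, hineq⟩
    refine exists_posSemidef_diagonal_add_of_le (by omega) hκ.le (fun j hj hjm => ?_) hineq
    rcases lt_or_ge j r with hjr | hjr
    · exact ((hzero j hjr).mpr hj).ge
    · exact (hmupos j hjr hjm).le

/-- Let `A ∈ ℂ^{n×n}` be Hermitian with eigenvalues (nonincreasing)
`lam 0 ≥ … ≥ lam (k-1) > 0 ≥ lam k ≥ … ≥ lam (n-1)`, let `D ∈ ℂ^{m×m}` be Hermitian with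
eigenvalues (nondecreasing) `mu 0 ≤ … ≤ mu (r-1) ≤ 0 < mu r ≤ … ≤ mu (m-1)`, let
`p = dim ker D` and let `κ > 0`.  Then there exists `K ∈ ℂ^{n×m}` with `‖K‖ ≤ κ` such that
`D + KᴴAK` is positive semidefinite if and only if `r − p ≤ k` and `κ²·lam i + mu i ≥ 0` for all
(0-indexed) `i < r − p`. -/
theorem exists_possemidef_completion_iff
    (n m k r p : ℕ) (hkn : k ≤ n) (hrm : r ≤ m) (hpr : p ≤ r)
    (κ : ℝ) (hκ : 0 < κ)
    (A : Matrix (Fin n) (Fin n) ℂ) (D : Matrix (Fin m) (Fin m) ℂ)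
    (lam mu : ℕ → ℝ)
    (hlam : ∀ i j : ℕ, i ≤ j → j < n → lam j ≤ lam i)
    (hlampos : ∀ i : ℕ, i < k → 0 < lam i)
    (hlamnonpos : ∀ i : ℕ, k ≤ i → i < n → lam i ≤ 0)
    (hmu : ∀ i j : ℕ, i ≤ j → j < m → mu i ≤ mu j)
    (hmunonpos : ∀ i : ℕ, i < r → mu i ≤ 0)
    (hmupos : ∀ i : ℕ, r ≤ i → i < m → 0 < mu i)
    (hAdiag : ∃ U ∈ Matrix.unitaryGroup (Fin n) ℂ,
      A = U * Matrix.diagonal (fun i : Fin n => (lam i : ℂ)) * Uᴴ)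
    (hDdiag : ∃ V ∈ Matrix.unitaryGroup (Fin m) ℂ,
      D = V * Matrix.diagonal (fun j : Fin m => (mu j : ℂ)) * Vᴴ)
    (hp : p = Module.finrank ℂ (LinearMap.ker D.mulVecLin)) :
    (∃ K : Matrix (Fin n) (Fin m) ℂ, specNorm K ≤ κ ∧ (D + Kᴴ * A * K).PosSemidef) ↔
      (r - p ≤ k ∧ ∀ i : ℕ, i < r - p → 0 ≤ κ ^ 2 * lam i + mu i) :=
  exists_possemidef_completion_iff_general n m k r p hkn hrm κ hκ A D lam mu hlam hlampos hlamnonpos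
    hmu hmunonpos hmupos hAdiag hDdiag hp
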